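/- arXiv:1801.05164 — 4 statements merged into one kernel-verified Lean document; each statement's English description precedes it below -/
import Mathlib

section
/- Let θ be an (anti-)automorphism of A*, X ⊆ A* a finite θ-invariant set, and Y the minimal generating set of the smallest θ-invariant free submonoid of A* containing X. Then every word y ∈ Y occurs as the initial factor (first letter of the unique Y-factorization) of some word of X, and also as the terminal factor of some word of X. -/
open List

/-- The submonoid of the free monoid `A*` (words as lists) generated by `S`:
all concatenations of finitely many words of `S`. -/
def wordStar {A : Type*} (S : Set (List A)) : Set (List A) :=
  {w | ∃ l : List (List A), (∀ x ∈ l, x ∈ S) ∧ l.flatten = w}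

/-- `X` is a (variable-length) code: every equation among words of `X` is trivial. -/
def isCodeL {A : Type*} (X : Set (List A)) : Prop :=
  ∀ l m : List (List A), (∀ w ∈ l, w ∈ X) → (∀ w ∈ m, w ∈ X) → l.flatten = m.flatten → l = m

/-- `θ` is an (anti-)automorphism of the free monoid `A*`: a bijection fixing the
empty word which is either a morphism or an anti-morphism. -/
def isAAA {A : Type*} (θ : List A → List A) : Prop :=
  Function.Bijective θ ∧ θ [] = [] ∧
    ((∀ u v : List A, θ (u ++ v) = θ u ++ θ v) ∨
     (∀ u v : List A, θ (u ++ v) = θ v ++ θ u))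

/-- `M` is a submonoid of the free monoid `A*`. -/
def isSubmonoidL {A : Type*} (M : Set (List A)) : Prop :=
  [] ∈ M ∧ ∀ u ∈ M, ∀ v ∈ M, u ++ v ∈ M

/-- The minimal generating set `(M∖{ε}) ∖ (M∖{ε})²` of a submonoid `M` of `A*`. -/
def mgsL {A : Type*} (M : Set (List A)) : Set (List A) :=
  (M \ {[]}) \ {w | ∃ u ∈ M \ ({[]} : Set (List A)), ∃ v ∈ M \ ({[]} : Set (List A)), w = u ++ v}

/-- `M` is a free submonoid of `A*`: it is generated by its minimal generating
set, which is a code. -/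
def isFreeSubmonoidL {A : Type*} (M : Set (List A)) : Prop :=
  isSubmonoidL M ∧ isCodeL (mgsL M) ∧ M = wordStar (mgsL M)

/-- `X` is complete: every word is a factor of some word of `X*`. -/
def isCompleteL {A : Type*} (X : Set (List A)) : Prop :=
  ∀ w : List A, ∃ u v : List A, u ++ w ++ v ∈ wordStar X

/-- `X` is a prefix code: `X ∩ XA⁺ = ∅`. -/
def isPrefixCodeL {A : Type*} (X : Set (List A)) : Prop :=
  ∀ x ∈ X, ∀ y ∈ X, x <+: y → x = y

/-- `X` is a suffix code: `X ∩ A⁺X = ∅`. -/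
def isSuffixCodeL {A : Type*} (X : Set (List A)) : Prop :=
  ∀ x ∈ X, ∀ y ∈ X, x <:+ y → x = y

/-!
Let `I` and `T` be the sets of initial and terminal `Y`-factors of words of `X`. Since `X` is
finite, `θ` permutes it, so `θ(M)` is again a `θ`-invariant free submonoid containing `X`;
minimality gives `θ(M) = M`, hence `θ(Y) = Y`. Therefore `θ` preserves `I` and `T` (morphism) or
exchanges them (antimorphism), and the words of `Y*` whose `Y`-factorization starts in `I` and
ends in `T` form a `θ`-invariant submonoid `N ⊇ X`. It is free: cutting a factorization exactly
between a terminal factor and a following initial one (`List.splitBy`) splits it uniquely into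
chunks, and the products of chunks form a code generating `N`. By minimality `M ⊆ N`, and a
single factor `y ∈ Y` lies in `N` only if `y ∈ I ∩ T`.
-/

section WordStar

variable {A : Type*}

lemma exists_map_eq_of_forall_mem_image {α β : Type*} (f : α → β) (S : Set α) {l : List β}
    (hl : ∀ b ∈ l, b ∈ f '' S) : ∃ ls : List α, (∀ a ∈ ls, a ∈ S) ∧ ls.map f = l := by
  induction l with
  | nil => exact ⟨[], by simp, rfl⟩
  | cons b l ih =>
    obtain ⟨a, ha, rfl⟩ := hl b mem_cons_self
    obtain ⟨ls, hls, rfl⟩ := ih fun c hc => hl c (mem_cons_of_mem _ hc)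
    exact ⟨a :: ls, by simpa [ha] using hls, rfl⟩

lemma mem_wordStar_of_mem {Z : Set (List A)} {z : List A} (h : z ∈ Z) : z ∈ wordStar Z :=
  ⟨[z], by simpa using h, by simp⟩

lemma isSubmonoidL_wordStar (Z : Set (List A)) : isSubmonoidL (wordStar Z) := by
  refine ⟨⟨[], by simp, rfl⟩, ?_⟩
  rintro _ ⟨lu, hlu, rfl⟩ _ ⟨lv, hlv, rfl⟩
  exact ⟨lu ++ lv, fun x hx => (mem_append.mp hx).elim (hlu x) (hlv x), flatten_append⟩

lemma wordStar_subset {Z N : Set (List A)} (hN : isSubmonoidL N) (hZ : Z ⊆ N) :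
    wordStar Z ⊆ N := by
  rintro _ ⟨l, hl, rfl⟩
  induction l with
  | nil => exact hN.1
  | cons z l ih =>
    exact hN.2 z (hZ (hl z mem_cons_self)) _ (ih fun x hx => hl x (mem_cons_of_mem _ hx))

lemma flatten_ne_nil_of_forall_mem {Z : Set (List A)} (hZ : [] ∉ Z) {l : List (List A)}
    (hl : ∀ w ∈ l, w ∈ Z) (hne : l ≠ []) : l.flatten ≠ [] := by
  obtain ⟨w, t, rfl⟩ := exists_cons_of_ne_nil hne
  have hw : w ≠ [] := fun h => hZ (h ▸ hl w mem_cons_self)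
  simp [hw]

lemma nil_notMem_mgsL (M : Set (List A)) : [] ∉ mgsL M := fun h => h.1.2 rfl

lemma mgsL_wordStar {Z : Set (List A)} (hZ : isCodeL Z) (h0 : [] ∉ Z) :
    mgsL (wordStar Z) = Z := by
  ext w
  constructor
  · rintro ⟨⟨⟨l, hl, rfl⟩, hw0⟩, hirr⟩
    obtain ⟨z, t, rfl⟩ := exists_cons_of_ne_nil (by rintro rfl; exact hw0 rfl : l ≠ [])
    obtain rfl | ht := eq_or_ne t []
    · simpa using hl z mem_cons_self
    · refine absurd ⟨z, ⟨mem_wordStar_of_mem (hl z mem_cons_self), ?_⟩,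
        t.flatten, ⟨⟨t, fun x hx => hl x (mem_cons_of_mem _ hx), rfl⟩, ?_⟩, flatten_cons⟩ hirr
      · exact fun h => h0 (h ▸ hl z mem_cons_self)
      · exact flatten_ne_nil_of_forall_mem h0 (fun x hx => hl x (mem_cons_of_mem _ hx)) ht
  · intro hw
    refine ⟨⟨mem_wordStar_of_mem hw, fun h => h0 (h ▸ hw)⟩, ?_⟩
    rintro ⟨_, ⟨⟨lu, hlu, rfl⟩, hu⟩, _, ⟨⟨lv, hlv, rfl⟩, hv⟩, huv⟩
    have hcode : lu ++ lv = [w] :=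
      hZ _ _ (fun x hx => (mem_append.mp hx).elim (hlu x) (hlv x)) (by simpa using hw)
        (by simp [huv])
    rcases append_eq_singleton_iff.mp hcode with ⟨rfl, -⟩ | ⟨-, rfl⟩
    exacts [hu rfl, hv rfl]

lemma isFreeSubmonoidL_wordStar {Z : Set (List A)} (hZ : isCodeL Z) (h0 : [] ∉ Z) :
    isFreeSubmonoidL (wordStar Z) := by
  rw [isFreeSubmonoidL, mgsL_wordStar hZ h0]
  exact ⟨isSubmonoidL_wordStar Z, hZ, rfl⟩

end WordStar

section Transport

variable {A : Type*} {θ : List A → List A}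

lemma flatten_map_of_morphism (h0 : θ [] = []) (hθ : ∀ u v, θ (u ++ v) = θ u ++ θ v)
    (l : List (List A)) : θ l.flatten = (l.map θ).flatten := by
  induction l with
  | nil => exact h0
  | cons a t ih => simp [hθ, ih]

lemma flatten_map_of_antimorphism (h0 : θ [] = []) (hθ : ∀ u v, θ (u ++ v) = θ v ++ θ u)
    (l : List (List A)) : θ l.flatten = (l.reverse.map θ).flatten := by
  induction l with
  | nil => exact h0
  | cons a t ih => simp [hθ, ih]

lemma image_wordStar (hθ : isAAA θ) (Y : Set (List A)) :
    θ '' wordStar Y = wordStar (θ '' Y) := by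
  obtain ⟨-, h0, hmor | hanti⟩ := hθ
  · ext w
    constructor
    · rintro ⟨_, ⟨l, hl, rfl⟩, rfl⟩
      exact ⟨l.map θ, by simpa using fun u hu => ⟨u, hl u hu, rfl⟩,
        (flatten_map_of_morphism h0 hmor l).symm⟩
    · rintro ⟨_, hl, rfl⟩
      obtain ⟨l, hlY, rfl⟩ := exists_map_eq_of_forall_mem_image θ Y hl
      exact ⟨l.flatten, ⟨l, hlY, rfl⟩, flatten_map_of_morphism h0 hmor l⟩
  · ext w
    constructor
    · rintro ⟨_, ⟨l, hl, rfl⟩, rfl⟩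
      exact ⟨l.reverse.map θ, by simpa using fun u hu => ⟨u, hl u hu, rfl⟩,
        (flatten_map_of_antimorphism h0 hanti l).symm⟩
    · rintro ⟨_, hl, rfl⟩
      obtain ⟨l, hlY, rfl⟩ := exists_map_eq_of_forall_mem_image θ Y hl
      refine ⟨l.reverse.flatten, ⟨l.reverse, by simpa using hlY, rfl⟩, ?_⟩
      rw [flatten_map_of_antimorphism h0 hanti, reverse_reverse]

lemma isCodeL.image {Y : Set (List A)} (hY : isCodeL Y) (hθ : isAAA θ) : isCodeL (θ '' Y) := by
  obtain ⟨⟨hinj, -⟩, h0, hmor | hanti⟩ := hθ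
  · intro _ _ hl hm heq
    obtain ⟨l, hlY, rfl⟩ := exists_map_eq_of_forall_mem_image θ Y hl
    obtain ⟨m, hmY, rfl⟩ := exists_map_eq_of_forall_mem_image θ Y hm
    simp only [← flatten_map_of_morphism h0 hmor] at heq
    rw [hY l m hlY hmY (hinj heq)]
  · intro _ _ hl hm heq
    obtain ⟨l, hlY, rfl⟩ := exists_map_eq_of_forall_mem_image θ Y hl
    obtain ⟨m, hmY, rfl⟩ := exists_map_eq_of_forall_mem_image θ Y hm
    rw [← reverse_reverse l, ← reverse_reverse m] at heq
    simp only [← flatten_map_of_antimorphism h0 hanti] at heq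
    rw [reverse_injective (hY _ _ (by simpa using hlY) (by simpa using hmY) (hinj heq))]

lemma nil_notMem_image {Y : Set (List A)} (hY : [] ∉ Y) (hθ : isAAA θ) : [] ∉ θ '' Y := by
  rintro ⟨y, hy, hθy⟩
  exact hY (hθ.1.1 (hθy.trans hθ.2.1.symm) ▸ hy)

lemma mgsL_image {M : Set (List A)} (hM : isFreeSubmonoidL M) (hθ : isAAA θ) :
    mgsL (θ '' M) = θ '' mgsL M := by
  rw [hM.2.2, image_wordStar hθ, mgsL_wordStar (hM.2.1.image hθ)
    (nil_notMem_image (nil_notMem_mgsL M) hθ), ← hM.2.2]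

lemma isFreeSubmonoidL.image {M : Set (List A)} (hM : isFreeSubmonoidL M) (hθ : isAAA θ) :
    isFreeSubmonoidL (θ '' M) := by
  rw [hM.2.2, image_wordStar hθ]
  exact isFreeSubmonoidL_wordStar (hM.2.1.image hθ) (nil_notMem_image (nil_notMem_mgsL M) hθ)

end Transport

section Chunks

variable {α : Type*} (I T : Set α)

open Classical in
noncomputable def noCut (a b : α) : Bool := !decide (a ∈ T ∧ b ∈ I)

def IsChunk (c : List α) : Prop :=
  c ≠ [] ∧ (∀ a ∈ c.head?, a ∈ I) ∧ (∀ a ∈ c.getLast?, a ∈ T) ∧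
    c.IsChain fun a b => noCut I T a b

variable {I T}

lemma noCut_eq_false {a b : α} : noCut I T a b = false ↔ a ∈ T ∧ b ∈ I := by
  simp [noCut]

lemma splitBy_flatten_of_forall_isChunk {cs : List (List α)} (h : ∀ c ∈ cs, IsChunk I T c) :
    cs.flatten.splitBy (noCut I T) = cs := by
  refine splitBy_eq_iff.mpr ⟨rfl, fun h0 => (h [] h0).1 rfl, fun c hc => (h c hc).2.2.2, ?_⟩
  refine Pairwise.isChain (pairwise_of_forall_mem_list fun a ha b hb => ?_)
  obtain ⟨ha0, -, haT, -⟩ := h a ha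
  obtain ⟨hb0, hbI, -, -⟩ := h b hb
  exact ⟨ha0, hb0, noCut_eq_false.mpr
    ⟨haT _ (getLast?_eq_some_getLast ha0), hbI _ (head?_eq_some_head hb0)⟩⟩

lemma isChunk_of_mem_splitBy {l c : List α} (hI : ∀ a ∈ l.head?, a ∈ I)
    (hT : ∀ a ∈ l.getLast?, a ∈ T) (hc : c ∈ l.splitBy (noCut I T)) : IsChunk I T c := by
  have hl : l ≠ [] := by rintro rfl; simp at hc
  refine ⟨ne_nil_of_mem_splitBy hc, ?_, ?_, isChain_of_mem_splitBy hc⟩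
  · refine (isChain_getLast_head_splitBy _ l).induction (fun c => ∀ a ∈ c.head?, a ∈ I) _
      ?_ ?_ c hc
    · rintro x y ⟨_, hy, hxy⟩ - a ha
      rw [head?_eq_some_head hy, Option.mem_some_iff] at ha
      exact ha ▸ (noCut_eq_false.mp hxy).2
    · intro hne a ha
      rw [head?_eq_some_head (ne_nil_of_mem_splitBy (head_mem hne)), Option.mem_some_iff,
        head_head_splitBy _ hl] at ha
      exact hI a (ha ▸ head?_eq_some_head hl)
  · refine (isChain_getLast_head_splitBy _ l).backwards_induction
      (fun c => ∀ a ∈ c.getLast?, a ∈ T) _ ?_ ?_ c hc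
    · rintro x y ⟨hx, _, hxy⟩ - a ha
      rw [getLast?_eq_some_getLast hx, Option.mem_some_iff] at ha
      exact ha ▸ (noCut_eq_false.mp hxy).1
    · intro hne a ha
      rw [getLast?_eq_some_getLast (ne_nil_of_mem_splitBy (getLast_mem hne)), Option.mem_some_iff,
        getLast_getLast_splitBy _ hl] at ha
      exact hT a (ha ▸ getLast?_eq_some_getLast hl)

end Chunks

section FramedWords

variable {A : Type*} (Y I T : Set (List A))

def framedWords : Set (List A) :=
  {w | ∃ l : List (List A), (∀ u ∈ l, u ∈ Y) ∧ (∀ a ∈ l.head?, a ∈ I) ∧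
    (∀ a ∈ l.getLast?, a ∈ T) ∧ l.flatten = w}

def chunkWords : Set (List A) :=
  flatten '' {c | (∀ u ∈ c, u ∈ Y) ∧ IsChunk I T c}

variable {Y I T}

lemma isSubmonoidL_framedWords : isSubmonoidL (framedWords Y I T) := by
  refine ⟨⟨[], by simp, by simp, by simp, rfl⟩, ?_⟩
  rintro _ ⟨l, hlY, hlI, hlT, rfl⟩ _ ⟨m, hmY, hmI, hmT, rfl⟩
  refine ⟨l ++ m, fun u hu => (mem_append.mp hu).elim (hlY u) (hmY u), ?_, ?_, flatten_append⟩
  · simp only [head?_append, Option.mem_def, Option.or_eq_some_iff]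
    rintro a (ha | ⟨-, ha⟩)
    exacts [hlI a ha, hmI a ha]
  · simp only [getLast?_append, Option.mem_def, Option.or_eq_some_iff]
    rintro a (ha | ⟨-, ha⟩)
    exacts [hmT a ha, hlT a ha]

lemma framedWords_eq_wordStar_chunkWords :
    framedWords Y I T = wordStar (chunkWords Y I T) := by
  refine subset_antisymm ?_ (wordStar_subset isSubmonoidL_framedWords ?_)
  · rintro _ ⟨l, hlY, hlI, hlT, rfl⟩
    refine ⟨(l.splitBy (noCut I T)).map flatten, ?_, by rw [← flatten_flatten, flatten_splitBy]⟩
    simp only [mem_map, forall_exists_index, and_imp, forall_apply_eq_imp_iff₂]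
    refine fun c hc => ⟨c, ⟨fun u hu => hlY u ?_, isChunk_of_mem_splitBy hlI hlT hc⟩, rfl⟩
    rw [← flatten_splitBy (noCut I T) l]
    exact mem_flatten_of_mem hc hu
  · rintro _ ⟨c, ⟨hcY, -, hcI, hcT, -⟩, rfl⟩
    exact ⟨c, hcY, hcI, hcT, rfl⟩

lemma isCodeL_chunkWords (hY : isCodeL Y) : isCodeL (chunkWords Y I T) := by
  intro _ _ hp hq heq
  obtain ⟨cs, hcs, rfl⟩ := exists_map_eq_of_forall_mem_image flatten _ hp
  obtain ⟨ds, hds, rfl⟩ := exists_map_eq_of_forall_mem_image flatten _ hq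
  simp only [← flatten_flatten] at heq
  have hflat : cs.flatten = ds.flatten :=
    hY _ _ (forall_mem_flatten.mpr fun c hc => (hcs c hc).1)
      (forall_mem_flatten.mpr fun d hd => (hds d hd).1) heq
  rw [← splitBy_flatten_of_forall_isChunk fun c hc => (hcs c hc).2, hflat,
    splitBy_flatten_of_forall_isChunk fun d hd => (hds d hd).2]

lemma nil_notMem_chunkWords (hY : [] ∉ Y) : [] ∉ chunkWords Y I T := by
  rintro ⟨c, ⟨hcY, hc0, -⟩, hc⟩
  exact flatten_ne_nil_of_forall_mem hY hcY hc0 hc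

theorem isFreeSubmonoidL_framedWords (hY : isCodeL Y) (h0 : [] ∉ Y) :
    isFreeSubmonoidL (framedWords Y I T) := by
  rw [framedWords_eq_wordStar_chunkWords]
  exact isFreeSubmonoidL_wordStar (isCodeL_chunkWords hY) (nil_notMem_chunkWords h0)

end FramedWords

section Factors

variable {A : Type*} {θ : List A → List A}

def initialFactors (Y X : Set (List A)) : Set (List A) :=
  {y | ∃ x ∈ X, ∃ l : List (List A), (∀ w ∈ l, w ∈ Y) ∧ (y :: l).flatten = x}

def terminalFactors (Y X : Set (List A)) : Set (List A) :=
  {y | ∃ x ∈ X, ∃ l : List (List A), (∀ w ∈ l, w ∈ Y) ∧ (l ++ [y]).flatten = x}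

variable {X Y I T : Set (List A)}

lemma subset_framedWords (hX : X ⊆ wordStar Y) :
    X ⊆ framedWords Y (initialFactors Y X) (terminalFactors Y X) := by
  intro x hx
  obtain ⟨l, hl, rfl⟩ := hX hx
  refine ⟨l, hl, fun a ha => ?_, fun a ha => ?_, rfl⟩
  · obtain ⟨t, rfl⟩ := head?_eq_some_iff.mp ha
    exact ⟨_, hx, t, fun w hw => hl w (mem_cons_of_mem _ hw), rfl⟩
  · obtain ⟨t, rfl⟩ := getLast?_eq_some_iff.mp ha
    exact ⟨_, hx, t, fun w hw => hl w (mem_append_left _ hw), rfl⟩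

lemma mem_of_mem_framedWords (hY : isCodeL Y) {y : List A} (hyY : y ∈ Y)
    (hy : y ∈ framedWords Y I T) : y ∈ I ∧ y ∈ T := by
  obtain ⟨l, hlY, hlI, hlT, hl⟩ := hy
  obtain rfl : l = [y] := hY l [y] hlY (by simpa using hyY) (by simpa using hl)
  exact ⟨hlI y rfl, hlT y rfl⟩

lemma forall_mem_map_of_image_subset (hY : θ '' Y ⊆ Y) {l : List (List A)}
    (hl : ∀ w ∈ l, w ∈ Y) : ∀ w ∈ l.map θ, w ∈ Y := by
  simpa using fun w hw => hY ⟨w, hl w hw, rfl⟩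

lemma image_factors_subset_of_morphism (h0 : θ [] = [])
    (hmor : ∀ u v, θ (u ++ v) = θ u ++ θ v) (hY : θ '' Y ⊆ Y) (hX : θ '' X ⊆ X) :
    θ '' initialFactors Y X ⊆ initialFactors Y X ∧
      θ '' terminalFactors Y X ⊆ terminalFactors Y X := by
  constructor <;> rintro _ ⟨y, ⟨x, hx, l, hl, rfl⟩, rfl⟩ <;>
    refine ⟨_, hX ⟨_, hx, rfl⟩, l.map θ, forall_mem_map_of_image_subset hY hl, ?_⟩ <;>
    (rw [flatten_map_of_morphism h0 hmor]; simp)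

lemma image_factors_subset_of_antimorphism (h0 : θ [] = [])
    (hanti : ∀ u v, θ (u ++ v) = θ v ++ θ u) (hY : θ '' Y ⊆ Y) (hX : θ '' X ⊆ X) :
    θ '' initialFactors Y X ⊆ terminalFactors Y X ∧
      θ '' terminalFactors Y X ⊆ initialFactors Y X := by
  constructor <;> rintro _ ⟨y, ⟨x, hx, l, hl, rfl⟩, rfl⟩ <;>
    refine ⟨_, hX ⟨_, hx, rfl⟩, l.reverse.map θ,
      forall_mem_map_of_image_subset hY (by simpa using hl), ?_⟩ <;>
    (rw [flatten_map_of_antimorphism h0 hanti]; simp)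

lemma image_framedWords_subset_of_morphism (h0 : θ [] = [])
    (hmor : ∀ u v, θ (u ++ v) = θ u ++ θ v) (hY : θ '' Y ⊆ Y) (hI : θ '' I ⊆ I)
    (hT : θ '' T ⊆ T) : θ '' framedWords Y I T ⊆ framedWords Y I T := by
  rintro _ ⟨_, ⟨l, hlY, hlI, hlT, rfl⟩, rfl⟩
  refine ⟨l.map θ, forall_mem_map_of_image_subset hY hlY, ?_, ?_,
    (flatten_map_of_morphism h0 hmor l).symm⟩
  · simpa using fun a ha => hI ⟨a, hlI a ha, rfl⟩
  · simpa using fun a ha => hT ⟨a, hlT a ha, rfl⟩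

lemma image_framedWords_subset_of_antimorphism (h0 : θ [] = [])
    (hanti : ∀ u v, θ (u ++ v) = θ v ++ θ u) (hY : θ '' Y ⊆ Y) (hI : θ '' I ⊆ T)
    (hT : θ '' T ⊆ I) : θ '' framedWords Y I T ⊆ framedWords Y I T := by
  rintro _ ⟨_, ⟨l, hlY, hlI, hlT, rfl⟩, rfl⟩
  refine ⟨l.reverse.map θ, forall_mem_map_of_image_subset hY (by simpa using hlY), ?_, ?_,
    (flatten_map_of_antimorphism h0 hanti l).symm⟩
  · simpa using fun a ha => hT ⟨a, hlT a ha, rfl⟩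
  · simpa using fun a ha => hI ⟨a, hlI a ha, rfl⟩

lemma image_framedWords_factors_subset (hθ : isAAA θ) (hY : θ '' Y ⊆ Y) (hX : θ '' X ⊆ X) :
    θ '' framedWords Y (initialFactors Y X) (terminalFactors Y X) ⊆
      framedWords Y (initialFactors Y X) (terminalFactors Y X) := by
  obtain ⟨-, h0, hmor | hanti⟩ := hθ
  · obtain ⟨hI, hT⟩ := image_factors_subset_of_morphism h0 hmor hY hX
    exact image_framedWords_subset_of_morphism h0 hmor hY hI hT
  · obtain ⟨hI, hT⟩ := image_factors_subset_of_antimorphism h0 hanti hY hX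
    exact image_framedWords_subset_of_antimorphism h0 hanti hY hI hT

end Factors

lemma image_eq_of_minimal {A : Type*} {θ : List A → List A} {X M : Set (List A)}
    (hθ : isAAA θ) (hfin : X.Finite) (hinv : θ '' X ⊆ X) (hM : isFreeSubmonoidL M)
    (hMinv : θ '' M ⊆ M) (hXM : X ⊆ M)
    (hmin : ∀ N : Set (List A), isFreeSubmonoidL N → θ '' N ⊆ N → X ⊆ N → M ⊆ N) :
    θ '' M = M := by
  have hθX : θ '' X = X :=
    ((hfin.injOn_iff_bijOn_of_mapsTo (Set.mapsTo_iff_image_subset.mpr hinv)).mp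
      hθ.1.1.injOn).image_eq
  refine hMinv.antisymm (hmin _ (hM.image hθ) (Set.image_mono hMinv) ?_)
  exact hθX ▸ Set.image_mono hXM

/-- Every word of the minimal generating set `Y` of the smallest θ-invariant free
submonoid containing a finite θ-invariant set `X` occurs as the initial factor,
and as the terminal factor, of the `Y`-factorization of some word of `X`. -/
theorem stmt4 {A : Type*} (θ : List A → List A) (hθ : isAAA θ)
    (X : Set (List A)) (hfin : X.Finite) (hinv : θ '' X ⊆ X)
    (M : Set (List A)) (hM : isFreeSubmonoidL M) (hMinv : θ '' M ⊆ M) (hXM : X ⊆ M)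
    (hmin : ∀ N : Set (List A), isFreeSubmonoidL N → θ '' N ⊆ N → X ⊆ N → M ⊆ N)
    (Y : Set (List A)) (hY : Y = mgsL M) :
    ∀ y ∈ Y,
      (∃ x ∈ X, ∃ l : List (List A), (∀ w ∈ l, w ∈ Y) ∧ (y :: l).flatten = x) ∧
      (∃ x ∈ X, ∃ l : List (List A), (∀ w ∈ l, w ∈ Y) ∧ (l ++ [y]).flatten = x) := by
  subst hY
  have hθM : θ '' M = M := image_eq_of_minimal hθ hfin hinv hM hMinv hXM hmin
  have hθY : θ '' mgsL M ⊆ mgsL M := by rw [← mgsL_image hM hθ, hθM]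
  have hMN : M ⊆ framedWords (mgsL M) (initialFactors (mgsL M) X) (terminalFactors (mgsL M) X) :=
    hmin _ (isFreeSubmonoidL_framedWords hM.2.1 (nil_notMem_mgsL M))
      (image_framedWords_factors_subset hθ hθY hinv) (subset_framedWords (hM.2.2 ▸ hXM))
  exact fun y hy => mem_of_mem_framedWords hM.2.1 hy (hMN hy.1.1)
end

section
/- Let A be a finite alphabet and θ an (anti-)automorphism of A*. If X ⊆ A* is a finite complete code, then for every letter a ∈ A there exists a unique positive integer p with a^p ∈ X. -/
open List

/-!
A factor `u a^N v ∈ X*` with `N` more than twice the maximal length of a word of `X` forces some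
word of the factorization to lie entirely inside the block `a^N`, so it is a power of `a`.
Uniqueness: `a^p` and `a^q` commute, so `(a^q)^p = (a^p)^q` is an equation between words of the
code `X`, whence `p = q`.
-/

namespace List

variable {α : Type*}

theorem exists_mem_isPrefix_of_flatten_eq {l : List (List α)} {L : ℕ}
    (hL : ∀ x ∈ l, x.length ≤ L) {w v : List α} (h : l.flatten = w ++ v) (hw : L < w.length) :
    ∃ x ∈ l, x <+: w := by
  cases l with
  | nil =>
    have := congrArg length h
    simp at this
    omega
  | cons x t =>
    refine ⟨x, mem_cons_self .., prefix_of_prefix_length_le ?_ (prefix_append w v) ?_⟩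
    · exact h ▸ prefix_append x t.flatten
    · exact (hL x (mem_cons_self ..)).trans hw.le

theorem exists_mem_isInfix_of_flatten_eq {l : List (List α)} {L : ℕ}
    (hL : ∀ x ∈ l, x.length ≤ L) {u w v : List α} (h : l.flatten = u ++ w ++ v)
    (hw : 2 * L < w.length) : ∃ x ∈ l, x <:+: w := by
  induction l generalizing u with
  | nil =>
    have := congrArg length h
    simp at this
    omega
  | cons x t ih =>
    have hx := hL x (mem_cons_self ..)
    rw [flatten_cons, append_assoc, append_eq_append_iff] at h
    rcases h with ⟨u', rfl, ht⟩ | ⟨c, rfl, hc⟩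
    · obtain ⟨y, hy, hyw⟩ := ih (fun y hy => hL y (mem_cons_of_mem _ hy)) (ht.trans (append_assoc ..).symm)
      exact ⟨y, mem_cons_of_mem _ hy, hyw⟩
    · rw [append_eq_append_iff] at hc
      rcases hc with ⟨c', rfl, -⟩ | ⟨w', rfl, ht⟩
      · simp only [length_append] at hx hw
        omega
      · simp only [length_append] at hx hw
        obtain ⟨y, hy, hyw⟩ := exists_mem_isPrefix_of_flatten_eq
          (fun y hy => hL y (mem_cons_of_mem _ hy)) ht (by omega)
        exact ⟨y, mem_cons_of_mem _ hy, hyw.isInfix.trans (suffix_append c w').isInfix⟩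

end List

namespace isCodeL

variable {A : Type*} {X : Set (List A)}

theorem nil_notMem (hX : isCodeL X) : [] ∉ X := fun h =>
  nomatch hX [[]] [] (by simpa using h) (by simp) (by simp)

theorem eq_of_replicate_mem (hX : isCodeL X) {a : A} {p q : ℕ}
    (hp : List.replicate p a ∈ X) (hq : List.replicate q a ∈ X) : p = q := by
  have h := hX (List.replicate q (List.replicate p a)) (List.replicate p (List.replicate q a))
    (fun w hw => List.eq_of_mem_replicate hw ▸ hp) (fun w hw => List.eq_of_mem_replicate hw ▸ hq)
    (by rw [List.flatten_replicate_replicate, List.flatten_replicate_replicate, Nat.mul_comm])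
  simpa using (congrArg List.length h).symm

end isCodeL

theorem isCompleteL.exists_replicate_mem {A : Type*} {X : Set (List A)} (hX : isCompleteL X)
    {L : ℕ} (hL : ∀ x ∈ X, x.length ≤ L) (hnil : [] ∉ X) (a : A) :
    ∃ p, 0 < p ∧ List.replicate p a ∈ X := by
  obtain ⟨u, v, l, hlX, hl⟩ := hX (List.replicate (2 * L + 1) a)
  obtain ⟨x, hxl, hx⟩ := List.exists_mem_isInfix_of_flatten_eq (fun x hx => hL x (hlX x hx)) hl
    (by simp)
  have hxX := hlX x hxl
  rw [List.infix_replicate_iff] at hx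
  exact ⟨x.length, List.length_pos_iff.2 fun h => hnil (h ▸ hxX), hx.2 ▸ hxX⟩

theorem stmt6_general {A : Type*} (X : Set (List A)) (hfin : X.Finite)
    (hcode : isCodeL X) (hcomp : isCompleteL X) :
    ∀ a : A, ∃! p : ℕ, 0 < p ∧ List.replicate p a ∈ X := by
  intro a
  obtain ⟨L, hL⟩ := (hfin.image List.length).bddAbove
  obtain ⟨p, hp, hpX⟩ :=
    hcomp.exists_replicate_mem (fun x hx => hL ⟨x, hx, rfl⟩) hcode.nil_notMem a
  exact ⟨p, ⟨hp, hpX⟩, fun q ⟨_, hqX⟩ => hcode.eq_of_replicate_mem hqX hpX⟩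

/-- Over a finite alphabet, a finite complete code contains exactly one power of
each letter. -/
theorem stmt6 {A : Type*} [Finite A] (X : Set (List A)) (hfin : X.Finite)
    (hcode : isCodeL X) (hcomp : isCompleteL X) :
    ∀ a : A, ∃! p : ℕ, 0 < p ∧ List.replicate p a ∈ X :=
  stmt6_general X hfin hcode hcomp
end

section
/- Let A = {a,b} and let θ be the automorphism of A* exchanging a and b. For every integer n ≥ 3, the set X = ⋃_{1≤i≤n−1} {aⁱb, bⁱa} ∪ {aⁿ, bⁿ} is a complete prefix code which is θ-invariant, and X is not suffix. -/
open List

/-!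
The words of `X` are the first runs `cⁱ` (`1 ≤ i ≤ n - 1`) closed by the other letter, together
with the full runs `cⁿ`. Reading the first run of a word stops, after at most `n` letters,
exactly at the end of a word of `X`. Hence no word of `X` is a proper prefix of another, so `X`
is a prefix code and thus a code; and every word is comparable in the prefix order with a word
of `X`, so peeling off such prefixes extends any word into `X*`, which gives completeness.
Swapping the letters preserves this shape, while `ab` is a proper suffix of `aab`.
-/

open List

section Words

variable {A : Type*}

theorem nil_mem_wordStar (S : Set (List A)) : ([] : List A) ∈ wordStar S :=
  ⟨[], by simp, rfl⟩

theorem append_mem_wordStar {S : Set (List A)} {x w : List A} (hx : x ∈ S)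
    (hw : w ∈ wordStar S) : x ++ w ∈ wordStar S := by
  obtain ⟨l, hl, rfl⟩ := hw
  exact ⟨x :: l, by simpa using ⟨hx, hl⟩, by simp⟩

theorem mem_wordStar_of_mem_s9 {S : Set (List A)} {x : List A} (hx : x ∈ S) : x ∈ wordStar S := by
  simpa using append_mem_wordStar hx (nil_mem_wordStar S)

theorem isCodeL_of_isPrefixCodeL {X : Set (List A)} (h0 : [] ∉ X) (hp : isPrefixCodeL X) :
    isCodeL X := by
  intro l
  induction l with
  | nil =>
    rintro (_ | ⟨y, m⟩) - hm hfl
    · rfl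
    · obtain ⟨rfl, -⟩ : y = [] ∧ _ := by simpa using hfl.symm
      exact absurd (hm [] mem_cons_self) h0
  | cons x l ih =>
    rintro (_ | ⟨y, m⟩) hl hm hfl
    · obtain ⟨rfl, -⟩ : x = [] ∧ _ := by simpa using hfl
      exact absurd (hl [] mem_cons_self) h0
    · simp only [flatten_cons] at hfl
      have hx := hl x mem_cons_self
      have hy := hm y mem_cons_self
      obtain rfl : x = y := by
        rcases prefix_or_prefix_of_prefix (⟨_, hfl⟩ : x <+: y ++ m.flatten) (prefix_append y _)
          with h | h
        · exact hp x hx y hy h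
        · exact (hp y hy x hx h).symm
      rw [ih m (fun w hw => hl w (mem_cons_of_mem _ hw)) (fun w hw => hm w (mem_cons_of_mem _ hw))
        (append_cancel_left hfl)]

theorem exists_append_mem_wordStar {X : Set (List A)} (h0 : [] ∉ X)
    (hcmp : ∀ w, ∃ x ∈ X, x <+: w ∨ w <+: x) (w : List A) : ∃ v, w ++ v ∈ wordStar X := by
  induction hlen : w.length using Nat.strong_induction_on generalizing w with
  | _ N ih =>
    obtain ⟨x, hx, ⟨w', rfl⟩ | ⟨v, rfl⟩⟩ := hcmp w
    · have hpos : 0 < x.length := length_pos_iff.2 fun h => h0 (h ▸ hx)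
      obtain ⟨v, hv⟩ := ih w'.length (by rw [← hlen, length_append]; omega) w' rfl
      exact ⟨v, by simpa using append_mem_wordStar hx hv⟩
    · exact ⟨v, mem_wordStar_of_mem_s9 hx⟩

theorem isCompleteL_of_forall_prefix_comparable {X : Set (List A)} (h0 : [] ∉ X)
    (hcmp : ∀ w, ∃ x ∈ X, x <+: w ∨ w <+: x) : isCompleteL X := fun w =>
  let ⟨v, hv⟩ := exists_append_mem_wordStar h0 hcmp w
  ⟨[], v, by simpa using hv⟩

end Words

section Runs

variable {α : Type*}

theorem replicate_append_singleton_prefix {c d d' : α} :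
    ∀ {i j : ℕ}, replicate i c ++ [d] <+: replicate j c ++ [d'] →
      (i = j ∧ d = d') ∨ (i < j ∧ d = c)
  | 0, 0, h => by simpa using h
  | 0, j + 1, h => by simpa [replicate_succ] using h
  | i + 1, 0, h => by simpa using h.length_le
  | i + 1, j + 1, h => by
    rw [replicate_succ, replicate_succ, cons_append, cons_append, cons_prefix_cons] at h
    rcases replicate_append_singleton_prefix h.2 with ⟨rfl, rfl⟩ | ⟨hij, rfl⟩
    · exact .inl ⟨rfl, rfl⟩
    · exact .inr ⟨by omega, rfl⟩

theorem first_run_trichotomy (c : α) :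
    ∀ (k : ℕ) (w : List α), (∃ i < k, ∃ d ≠ c, replicate i c ++ [d] <+: w) ∨
      replicate k c <+: w ∨ w <+: replicate k c
  | 0, _ => .inr (.inl nil_prefix)
  | _ + 1, [] => .inr (.inr nil_prefix)
  | k + 1, a :: w => by
    by_cases hac : a = c
    · subst hac
      rcases first_run_trichotomy a k w with ⟨i, hik, d, hd, hpre⟩ | hpre | hpre
      · exact .inl ⟨i + 1, by omega, d, hd, by simpa [replicate_succ] using hpre⟩
      · exact .inr (.inl (by simpa [replicate_succ] using hpre))
      · exact .inr (.inr (by simpa [replicate_succ] using hpre))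
    · exact .inl ⟨0, by omega, a, hac, by simp⟩

end Runs

def runCode (n : ℕ) : Set (List Bool) :=
  {w | ∃ i, 1 ≤ i ∧ i ≤ n - 1 ∧
      (w = replicate i true ++ [false] ∨ w = replicate i false ++ [true])}
    ∪ {replicate n true, replicate n false}

theorem replicate_mem_runCode (n : ℕ) (c : Bool) : replicate n c ∈ runCode n := by
  cases c <;> simp [runCode]

theorem mem_runCode_iff {n : ℕ} (hn : 2 ≤ n) {w : List Bool} :
    w ∈ runCode n ↔
      ∃ i c d, w = replicate i c ++ [d] ∧ 1 ≤ i ∧ i ≤ n - 1 ∧ (d = c → i = n - 1) := by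
  have hfull (c : Bool) : replicate n c = replicate (n - 1) c ++ [c] := by
    rw [← replicate_succ', Nat.sub_add_cancel (by omega)]
  constructor
  · rintro (⟨i, h1, h2, rfl | rfl⟩ | rfl | rfl)
    · exact ⟨i, true, false, rfl, h1, h2, by simp⟩
    · exact ⟨i, false, true, rfl, h1, h2, by simp⟩
    · exact ⟨n - 1, true, true, hfull true, by omega, le_rfl, fun _ => rfl⟩
    · exact ⟨n - 1, false, false, hfull false, by omega, le_rfl, fun _ => rfl⟩
  · rintro ⟨i, c, d, rfl, h1, h2, hdc⟩
    by_cases hd : d = c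
    · subst hd
      rw [hdc rfl, ← hfull]
      exact replicate_mem_runCode n d
    · refine .inl ⟨i, h1, h2, ?_⟩
      cases c <;> cases d <;> simp_all

theorem nil_notMem_runCode {n : ℕ} (hn : 2 ≤ n) : [] ∉ runCode n := by
  rw [mem_runCode_iff hn]
  rintro ⟨i, c, d, h, -⟩
  simpa using congrArg length h

theorem isPrefixCodeL_runCode {n : ℕ} (hn : 2 ≤ n) : isPrefixCodeL (runCode n) := by
  intro x hx y hy hxy
  obtain ⟨i, c, d, rfl, hi, -, hfull⟩ := (mem_runCode_iff hn).1 hx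
  obtain ⟨j, c', d', rfl, hj, hjn, -⟩ := (mem_runCode_iff hn).1 hy
  obtain ⟨i, rfl⟩ := Nat.exists_eq_add_of_le' hi
  obtain ⟨j, rfl⟩ := Nat.exists_eq_add_of_le' hj
  rw [replicate_succ, replicate_succ, cons_append, cons_append, cons_prefix_cons] at hxy
  obtain ⟨rfl, hxy⟩ := hxy
  rcases replicate_append_singleton_prefix hxy with ⟨rfl, rfl⟩ | ⟨hij, rfl⟩
  · rfl
  · have := hfull rfl
    omega

theorem exists_runCode_prefix_comparable {n : ℕ} (hn : 2 ≤ n) (w : List Bool) :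
    ∃ x ∈ runCode n, x <+: w ∨ w <+: x := by
  rcases w with _ | ⟨c, w⟩
  · exact ⟨replicate n true, replicate_mem_runCode n true, .inr nil_prefix⟩
  have hfull : replicate n c = c :: replicate (n - 1) c := by
    rw [← replicate_succ, Nat.sub_add_cancel (by omega)]
  rcases first_run_trichotomy c (n - 1) w with ⟨i, hi, d, hd, hpre⟩ | hpre | hpre
  · refine ⟨replicate (i + 1) c ++ [d], (mem_runCode_iff hn).2
      ⟨i + 1, c, d, rfl, by omega, by omega, fun h => absurd h hd⟩, .inl ?_⟩
    simpa [replicate_succ] using hpre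
  · exact ⟨replicate n c, replicate_mem_runCode n c, .inl (by rwa [hfull, prefix_cons_inj])⟩
  · exact ⟨replicate n c, replicate_mem_runCode n c, .inr (by rwa [hfull, prefix_cons_inj])⟩

theorem map_not_mem_runCode {n : ℕ} (hn : 2 ≤ n) {w : List Bool} (hw : w ∈ runCode n) :
    w.map (fun c => !c) ∈ runCode n := by
  obtain ⟨i, c, d, rfl, h1, h2, hdc⟩ := (mem_runCode_iff hn).1 hw
  exact (mem_runCode_iff hn).2 ⟨i, !c, !d, by simp, h1, h2, fun h => hdc (by simpa using h)⟩

theorem not_isSuffixCodeL_runCode {n : ℕ} (hn : 3 ≤ n) : ¬ isSuffixCodeL (runCode n) := by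
  intro h
  have hab : [true, false] ∈ runCode n := .inl ⟨1, by omega, by omega, .inl rfl⟩
  have haab : [true, true, false] ∈ runCode n := .inl ⟨2, by omega, by omega, .inl rfl⟩
  simpa using h _ hab _ haab ⟨[true], rfl⟩

/-- Over `A = {a, b}` (here `a = true`, `b = false`) with θ the automorphism
exchanging the two letters, for every `n ≥ 3` the set
`X = ⋃_{1≤i≤n-1} {aⁱb, bⁱa} ∪ {aⁿ, bⁿ}` is a complete prefix θ-invariant code
which is not suffix. -/
theorem stmt9 (n : ℕ) (hn : 3 ≤ n)
    (θ : List Bool → List Bool) (hθ : θ = fun w => w.map (fun c => !c))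
    (X : Set (List Bool))
    (hX : X = {w | ∃ i, 1 ≤ i ∧ i ≤ n - 1 ∧
          (w = List.replicate i true ++ [false] ∨ w = List.replicate i false ++ [true])}
        ∪ {List.replicate n true, List.replicate n false}) :
    isCodeL X ∧ isPrefixCodeL X ∧ isCompleteL X ∧ θ '' X ⊆ X ∧ ¬ isSuffixCodeL X := by
  obtain rfl : X = runCode n := hX
  subst hθ
  have hn2 : 2 ≤ n := by omega
  refine ⟨isCodeL_of_isPrefixCodeL (nil_notMem_runCode hn2) (isPrefixCodeL_runCode hn2),
    isPrefixCodeL_runCode hn2,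
    isCompleteL_of_forall_prefix_comparable (nil_notMem_runCode hn2)
      (exists_runCode_prefix_comparable hn2), ?_, not_isSuffixCodeL_runCode hn⟩
  rintro _ ⟨w, hw, rfl⟩
  exact map_not_mem_runCode hn2 hw
end

section
/- Let X ⊆ A* be a non-complete θ-invariant code, y ∉ F(X*) a word whose first and last letters differ, z = \bar{a}^{|y|} y a^{|y|} where y ∈ aA*\bar{a} with a ≠ \bar{a}, and Z = ⋃_{i∈ℤ} {θⁱ(z)}. If u, v ∈ A⁺ and i, j ∈ ℤ satisfy θⁱ(z)v = uθʲ(z) with |u| ≤ |z| − 1, then |u| = |v| ≥ 2|y|, and there exist a letter b and a unique integer k with 1 ≤ k ≤ |y| such that θⁱ(z) = u b^k and θʲ(z) = b^k v. -/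
/-!
Every `θⁱ` is a letter-to-letter morphism, possibly followed by reversal, so every word of `Z`
has the shape `cⁿ m bⁿ` with `n = |y|`, `|m| = n`, `m ∈ bA*c` and `b ≠ c`.  If `θⁱ(z) v = u θʲ(z)`,
the overlap `s` (a suffix of `θⁱ(z)` and a prefix of `θʲ(z)`) has length `3n - |u|`.  Were it
longer than `n`, the pattern `c'ⁿ b'` (`b' ≠ c'`) starting `θʲ(z)` would occur in `cⁿ m bⁿ` at a
shift `d` with `1 ≤ d < 2n`; but the block `c'ⁿ` would then contain the positions `d < n` and `n`
(letters `c ≠ b`), or `c'ⁿ b'` would hit `b` twice at positions `n, 2n` or `d + n - 1, d + n`.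
So `|s| ≤ n`, hence `s` lies inside the final block `bⁿ`.
-/

open List

section AntiAutomorphism

variable {A : Type*}

theorem isAAA_id : isAAA (id : List A → List A) :=
  ⟨Function.bijective_id, rfl, Or.inl fun _ _ => rfl⟩

theorem isAAA.comp {f g : List A → List A} (hf : isAAA f) (hg : isAAA g) : isAAA (f ∘ g) := by
  obtain ⟨hf_bij, hf_nil, hf_mul⟩ := hf
  obtain ⟨hg_bij, hg_nil, hg_mul⟩ := hg
  refine ⟨hf_bij.comp hg_bij, by simp [hg_nil, hf_nil], ?_⟩
  rcases hf_mul with hf_mul | hf_mul <;> rcases hg_mul with hg_mul | hg_mul <;>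
    [left; right; right; left] <;> intro u v <;> simp [hf_mul, hg_mul]

theorem isAAA.symm {g : Equiv.Perm (List A)} (hg : isAAA g) : isAAA g.symm := by
  obtain ⟨-, hg_nil, hg_mul⟩ := hg
  refine ⟨g.symm.bijective, g.symm_apply_eq.mpr hg_nil.symm, ?_⟩
  rcases hg_mul with hg_mul | hg_mul <;> [left; right] <;> intro u v <;>
    exact g.injective (by simp [hg_mul])

def aaaSubgroup (A : Type*) : Subgroup (Equiv.Perm (List A)) where
  carrier := {g | isAAA g}
  mul_mem' hf hg := hf.comp hg
  one_mem' := isAAA_id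
  inv_mem' hg := hg.symm

theorem isAAA.zpow {θ : Equiv.Perm (List A)} (hθ : isAAA θ) (i : ℤ) : isAAA ⇑(θ ^ i) :=
  (aaaSubgroup A).zpow_mem hθ i

theorem isAAA.length_le {θ : List A → List A} (hθ : isAAA θ) (w : List A) :
    w.length ≤ (θ w).length := by
  obtain ⟨⟨hθ_inj, -⟩, hθ_nil, hθ_mul⟩ := hθ
  induction w with
  | nil => simp
  | cons x t ih =>
    have hx : θ [x] ≠ [] := fun h => by simpa using hθ_inj (h.trans hθ_nil.symm)
    have := length_pos_iff.mpr hx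
    change ([x] ++ t).length ≤ (θ ([x] ++ t)).length
    rcases hθ_mul with h | h <;> rw [h] <;> simp only [length_append, length_singleton] <;> omega

theorem isAAA.length_apply {g : Equiv.Perm (List A)} (hg : isAAA g) (w : List A) :
    (g w).length = w.length := by
  have := hg.symm.length_le (g w)
  rw [Equiv.symm_apply_apply] at this
  exact le_antisymm this (hg.length_le w)

theorem isAAA.exists_map {g : Equiv.Perm (List A)} (hg : isAAA g) :
    ∃ f : A → A, Function.Injective f ∧
      ((∀ w, g w = w.map f) ∨ ∀ w, g w = (w.map f).reverse) := by
  choose f hf using fun x => length_eq_one_iff.mp (hg.length_apply [x])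
  have hf_inj : Function.Injective f := fun x x' hxx' =>
    singleton_inj.mp <| g.injective ((hf x).trans (hxx' ▸ (hf x').symm))
  refine ⟨f, hf_inj, ?_⟩
  rcases hg.2.2 with h | h <;> [left; right] <;> intro w <;> induction w with
  | nil => simpa using hg.2.1
  | cons x t ih => rw [← singleton_append, h, hf, ih]; simp

end AntiAutomorphism

section Framed

variable {A : Type*}

/-- The shape `b̄^{|y|} θⁱ(y) b^{|y|}` of the words of `Z`, with `n = |y|`. -/
def IsFramed (n : ℕ) (w : List A) : Prop :=
  ∃ b c : A, b ≠ c ∧ ∃ m : List A, m.length = n ∧ m.head? = some b ∧ m.getLast? = some c ∧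
    w = replicate n c ++ m ++ replicate n b

variable {n : ℕ} {w w₁ w₂ u v s : List A}

theorem IsFramed.length_eq (h : IsFramed n w) : w.length = 3 * n := by
  obtain ⟨b, c, -, m, hm, -, -, rfl⟩ := h
  simp only [length_append, length_replicate, hm]
  omega

theorem IsFramed.map (h : IsFramed n w) {f : A → A} (hf : Function.Injective f) :
    IsFramed n (w.map f) := by
  obtain ⟨b, c, hbc, m, hm, hb, hc, rfl⟩ := h
  exact ⟨f b, f c, hf.ne hbc, m.map f, by simp [hm], by simp [hb], by simp [hc], by simp⟩

theorem IsFramed.reverse (h : IsFramed n w) : IsFramed n w.reverse := by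
  obtain ⟨b, c, hbc, m, hm, hb, hc, rfl⟩ := h
  exact ⟨c, b, hbc.symm, m.reverse, by simp [hm], by simp [hc], by simp [hb], by simp⟩

theorem IsFramed.apply_of_isAAA {g : Equiv.Perm (List A)} (hg : isAAA g) (h : IsFramed n w) :
    IsFramed n (g w) := by
  obtain ⟨f, hf, hmor | hanti⟩ := hg.exists_map
  · exact hmor w ▸ h.map hf
  · exact hanti w ▸ (h.map hf).reverse

theorem IsFramed.exists_getElem? (h : IsFramed n w) :
    ∃ b c : A, b ≠ c ∧ (∀ p < n, w[p]? = some c) ∧ w[n]? = some b ∧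
      ∀ p, 2 * n ≤ p → p < 3 * n → w[p]? = some b := by
  obtain ⟨b, c, hbc, m, hm, hb, -, rfl⟩ := h
  refine ⟨b, c, hbc, fun p hp => ?_, ?_, fun p hp hp' => ?_⟩
  · rw [append_assoc, getElem?_append_left (by simpa), getElem?_replicate_of_lt hp]
  · rw [append_assoc, getElem?_append_right (by simp), length_replicate, Nat.sub_self,
      ← head?_eq_getElem?, head?_append, hb, Option.some_or]
  · rw [getElem?_append_right (by simp [hm]; omega)]
    exact getElem?_replicate_of_lt (by simp [hm]; omega)

theorem IsFramed.length_le_of_overlap (h₁ : IsFramed n w₁) (h₂ : IsFramed n w₂) (hu : u ≠ [])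
    (hw₁ : w₁ = u ++ s) (hw₂ : w₂ = s ++ v) : s.length ≤ n := by
  by_contra! hs
  have hlen : u.length + s.length = 3 * n := by rw [← h₁.length_eq, hw₁, length_append]
  have hd := length_pos_iff.mpr hu
  have shift : ∀ t < s.length, w₁[u.length + t]? = w₂[t]? := fun t ht => by
    rw [hw₁, hw₂, getElem?_append_right (by omega), Nat.add_sub_cancel_left,
      getElem?_append_left ht]
  obtain ⟨b₁, c₁, hbc₁, hc₁, hb₁, hb₁'⟩ := h₁.exists_getElem?
  obtain ⟨b₂, c₂, hbc₂, hc₂, hb₂, -⟩ := h₂.exists_getElem?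
  rcases lt_trichotomy u.length n with hlt | heq | hgt
  · have e₁ := shift 0 (by omega)
    have e₂ := shift (n - u.length) (by omega)
    rw [hc₂ _ (by omega), add_zero, hc₁ _ hlt] at e₁
    rw [hc₂ _ (by omega), Nat.add_sub_cancel' hlt.le, hb₁] at e₂
    exact hbc₁ (Option.some.inj (e₂.trans e₁.symm))
  · have e₁ := shift 0 (by omega)
    have e₂ := shift n (by omega)
    rw [hc₂ _ (by omega), add_zero, heq, hb₁] at e₁
    rw [hb₂, hb₁' _ (by omega) (by omega)] at e₂
    exact hbc₂ (Option.some.inj (e₂.symm.trans e₁))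
  · have e₁ := shift (n - 1) (by omega)
    have e₂ := shift n (by omega)
    rw [hc₂ _ (by omega), hb₁' _ (by omega) (by omega)] at e₁
    rw [hb₂, hb₁' _ (by omega) (by omega)] at e₂
    exact hbc₂ (Option.some.inj (e₂.symm.trans e₁))

theorem IsFramed.exists_eq_replicate_of_isSuffix (h : IsFramed n w) (hs : s <:+ w)
    (hsn : s.length ≤ n) : ∃ b, s = replicate s.length b := by
  obtain ⟨b, c, -, m, -, -, -, rfl⟩ := h
  have hsb : s <:+ replicate n b :=
    suffix_of_suffix_length_le hs (suffix_append _ _) (by simpa using hsn)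
  exact ⟨b, eq_replicate_iff.mpr ⟨rfl, fun x hx => eq_of_mem_replicate (hsb.subset hx)⟩⟩

theorem IsFramed.overlap (h₁ : IsFramed n w₁) (h₂ : IsFramed n w₂) (hu : u ≠ [])
    (hlt : u.length < 3 * n) (heq : w₁ ++ v = u ++ w₂) :
    u.length = v.length ∧ 2 * n ≤ u.length ∧
      ∃ b : A, ∃! k : ℕ, 1 ≤ k ∧ k ≤ n ∧ w₁ = u ++ replicate k b ∧ w₂ = replicate k b ++ v := by
  have hlen := congrArg length heq
  simp only [length_append, h₁.length_eq, h₂.length_eq] at hlen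
  obtain ⟨s, hw₁, hw₂⟩ : ∃ s, w₁ = u ++ s ∧ w₂ = s ++ v := by
    rcases append_eq_append_iff.mp heq with ⟨s, rfl, -⟩ | hs
    · simp [h₁.length_eq] at hlt
    · exact hs
  have hs_len : u.length + s.length = 3 * n := by rw [← h₁.length_eq, hw₁, length_append]
  have hsn := h₁.length_le_of_overlap h₂ hu hw₁ hw₂
  obtain ⟨b, hb⟩ := h₁.exists_eq_replicate_of_isSuffix (hw₁ ▸ suffix_append u s) hsn
  refine ⟨by omega, by omega, b, s.length, ⟨by omega, hsn, hb ▸ hw₁, hb ▸ hw₂⟩, ?_⟩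
  rintro k ⟨-, -, hk, -⟩
  have := congrArg length hk
  simp only [h₁.length_eq, length_append, length_replicate] at this
  omega

end Framed

theorem stmt15_general {A : Type*} (θ : Equiv.Perm (List A)) (hθ : isAAA ⇑θ)
    (y : List A)
    (a abar : A) (hhead : y.head? = some a) (hlast : y.getLast? = some abar)
    (hne : a ≠ abar)
    (z : List A) (hz : z = List.replicate y.length abar ++ y ++ List.replicate y.length a) :
    ∀ (u v : List A) (i j : ℤ), u ≠ [] → v ≠ [] → u.length ≤ z.length - 1 →
      (θ ^ i) z ++ v = u ++ (θ ^ j) z →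
      u.length = v.length ∧ 2 * y.length ≤ u.length ∧
      ∃ b : A, ∃! k : ℕ, 1 ≤ k ∧ k ≤ y.length ∧
        (θ ^ i) z = u ++ List.replicate k b ∧ (θ ^ j) z = List.replicate k b ++ v := by
  intro u v i j hu _ hule heq
  have hz : IsFramed y.length z := ⟨a, abar, hne, y, rfl, hhead, hlast, hz⟩
  have hlt : u.length < 3 * y.length := by
    have := length_pos_iff.mpr hu
    rw [hz.length_eq] at hule
    omega
  exact (hz.apply_of_isAAA (hθ.zpow i)).overlap (hz.apply_of_isAAA (hθ.zpow j)) hu hlt heq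

/-- Overlap lemma for `Z = {θⁱ(z) : i ∈ ℤ}`, where `z = ā^{|y|} y a^{|y|}` is
built from a word `y ∉ F(X*)` starting with `a` and ending with `ā ≠ a`:
if `θⁱ(z) v = u θʲ(z)` with `u, v` nonempty and `|u| ≤ |z| - 1`, then
`|u| = |v| ≥ 2|y|` and for a letter `b` and a unique `k` with `1 ≤ k ≤ |y|`
we have `θⁱ(z) = u bᵏ` and `θʲ(z) = bᵏ v`. -/
theorem stmt15 {A : Type*} (θ : Equiv.Perm (List A)) (hθ : isAAA ⇑θ)
    (X : Set (List A)) (hcode : isCodeL X) (hinv : ⇑θ '' X ⊆ X)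
    (hncomp : ¬ isCompleteL X)
    (y : List A) (hy : ∀ u v : List A, u ++ y ++ v ∉ wordStar X)
    (a abar : A) (hhead : y.head? = some a) (hlast : y.getLast? = some abar)
    (hne : a ≠ abar)
    (z : List A) (hz : z = List.replicate y.length abar ++ y ++ List.replicate y.length a) :
    ∀ (u v : List A) (i j : ℤ), u ≠ [] → v ≠ [] → u.length ≤ z.length - 1 →
      (θ ^ i) z ++ v = u ++ (θ ^ j) z →
      u.length = v.length ∧ 2 * y.length ≤ u.length ∧
      ∃ b : A, ∃! k : ℕ, 1 ≤ k ∧ k ≤ y.length ∧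
        (θ ^ i) z = u ++ List.replicate k b ∧ (θ ^ j) z = List.replicate k b ++ v :=
  stmt15_general θ hθ y a abar hhead hlast hne z hz
end
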